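/- For fixed r and y = (1/2) log h, ∑_{0 ≤ h₁,…,h_r ≤ h distinct} ∏_{p ≤ y} (1 - ν_p(h)/p) = h^r ∏_{p ≤ y}(1 - 1/p)^r + O(h^{r - 1/2 + o(1)}). -/

import Mathlib

open Finset

noncomputable def nu (p : ℕ) {r : ℕ} (a : Fin r → ℤ) : ℕ :=
  (Finset.univ.image (fun i => ((a i : ZMod p)))).card

noncomputable def distinctTuples (r h : ℕ) : Finset (Fin r → ℤ) :=
  (Fintype.piFinset (fun _ : Fin r => Finset.Icc (0:ℤ) (h:ℤ))).filter
    (fun a => ∀ i j : Fin r, i ≠ j → a i ≠ a j)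

/-!
Write `1 - ν_p(a)/p` as the proportion of residues `c` mod `p` avoided by every `aᵢ`. Summed
over the whole box `[0, h]^r`, the product over `p ∈ Q` then becomes an average, over all
systems of residues `γ = (γ_p)_{p ∈ Q}`, of `T_γ ^ r`, where `T_γ` counts the `x ∈ [0, h]` with
`x ≢ γ_p (mod p)` for every `p`. Legendre's sieve and the Chinese remainder theorem give
`T_γ = (h + 1) ∏ (1 - 1/p) + O(2^|Q|)`, and since `|Q| ≤ y + 1 ≤ (log h)/2 + 1` with
`log 2 < 1`, the resulting loss `O(h^(r - 1 + (log 2)/2))` is `o(h^(r - 1/2 + ε))`. Tuples with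
a repeated entry, and replacing `h + 1` by `h`, cost only `O(h^(r - 1))`.
-/

open Function Filter

theorem abs_pow_sub_pow_le_of_le {x y N : ℝ} (hx : 0 ≤ x) (hy : 0 ≤ y) (hxN : x ≤ N)
    (hyN : y ≤ N) (r : ℕ) : |x ^ r - y ^ r| ≤ r * N ^ (r - 1) * |x - y| := by
  calc |x ^ r - y ^ r| ≤ |x - y| * r * max |x| |y| ^ (r - 1) := abs_pow_sub_pow_le x y r
    _ ≤ |x - y| * r * N ^ (r - 1) := by
        gcongr
        rw [abs_of_nonneg hx, abs_of_nonneg hy]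
        exact max_le hxN hyN
    _ = r * N ^ (r - 1) * |x - y| := by ring

theorem abs_card_filter_forall_not_sub_le {α ι : Type*} [DecidableEq ι] (I : Finset α)
    (s : Finset ι) (A : ι → α → Prop) [∀ i, DecidablePred (A i)] (δ : ι → ℝ) (N : ℝ)
    (hA : ∀ t ⊆ s, |(#{x ∈ I | ∀ i ∈ t, A i x} : ℝ) - N * ∏ i ∈ t, δ i| ≤ 1) :
    |(#{x ∈ I | ∀ i ∈ s, ¬ A i x} : ℝ) - N * ∏ i ∈ s, (1 - δ i)| ≤ 2 ^ #s := by
  have expand (g : ι → ℝ) :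
      ∏ i ∈ s, (1 - g i) = ∑ t ∈ s.powerset, (-1) ^ #t * ∏ i ∈ t, g i := by
    simp [prod_sub]
  have hcount : (#{x ∈ I | ∀ i ∈ s, ¬ A i x} : ℝ) =
      ∑ t ∈ s.powerset, (-1) ^ #t * (#{x ∈ I | ∀ i ∈ t, A i x} : ℝ) := by
    have hpoint (x : α) : (if ∀ i ∈ s, ¬ A i x then (1 : ℝ) else 0) =
        ∑ t ∈ s.powerset, (-1) ^ #t * if ∀ i ∈ t, A i x then 1 else 0 := by
      simp_rw [← prod_boole, ← expand]
      exact prod_congr rfl fun i _ => by split_ifs <;> simp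
    simp_rw [card_filter, Nat.cast_sum, mul_sum, Nat.cast_ite, Nat.cast_one, Nat.cast_zero, hpoint]
    exact sum_comm
  calc |(#{x ∈ I | ∀ i ∈ s, ¬ A i x} : ℝ) - N * ∏ i ∈ s, (1 - δ i)|
      = |∑ t ∈ s.powerset, (-1) ^ #t *
          ((#{x ∈ I | ∀ i ∈ t, A i x} : ℝ) - N * ∏ i ∈ t, δ i)| := by
        rw [hcount, expand, mul_sum, ← sum_sub_distrib]
        simp_rw [mul_sub]
        congr 2 with t
        ring
    _ ≤ ∑ t ∈ s.powerset, 1 := by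
        refine (abs_sum_le_sum_abs _ _).trans (sum_le_sum fun t ht => ?_)
        rw [abs_mul, abs_pow, abs_neg, abs_one, one_pow, one_mul]
        exact hA t (mem_powerset.mp ht)
    _ = 2 ^ #s := by simp

theorem Int.abs_card_Icc_filter_modEq_sub_le {a b : ℤ} (hab : a ≤ b + 1) (v : ℤ) {m : ℕ}
    (hm : 0 < m) : |(#{x ∈ Icc a b | x ≡ v [ZMOD m]} : ℝ) - (b + 1 - a) / m| ≤ 1 := by
  have hm' : (0 : ℤ) < m := by exact_mod_cast hm
  set u : ℚ := (b + 1 - v) / m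
  set w : ℚ := (a - v) / m
  have huw : w ≤ u := by
    have : (a : ℚ) ≤ b + 1 := by exact_mod_cast hab
    simp only [u, w]; gcongr
  have hcount : (#{x ∈ Icc a b | x ≡ v [ZMOD m]} : ℤ) = ⌈u⌉ - ⌈w⌉ := by
    rw [← Ico_add_one_right_eq_Icc, Int.Ico_filter_modEq_card _ _ hm']
    push_cast
    exact max_eq_left (sub_nonneg.mpr (Int.ceil_mono huw))
  have hq : |(#{x ∈ Icc a b | x ≡ v [ZMOD m]} : ℚ) - (u - w)| ≤ 1 := by
    have : (#{x ∈ Icc a b | x ≡ v [ZMOD m]} : ℚ) = ((⌈u⌉ - ⌈w⌉ : ℤ) : ℚ) := by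
      exact_mod_cast hcount
    rw [this, abs_le]
    push_cast
    constructor <;>
      linarith [Int.le_ceil u, Int.ceil_lt_add_one u, Int.le_ceil w, Int.ceil_lt_add_one w]
  have huw' : u - w = (b + 1 - a) / m := by simp only [u, w]; ring
  rw [huw'] at hq
  exact_mod_cast hq

theorem ZMod.exists_forall_intCast_eq_iff_modEq_prod {ι : Type*} (t : Finset ι) (m : ι → ℕ)
    (hm : ∀ i ∈ t, m i ≠ 0) (hcop : (t : Set ι).Pairwise (Nat.Coprime on m))
    (c : ∀ i, ZMod (m i)) :
    ∃ v : ℤ, ∀ x : ℤ, (∀ i ∈ t, (x : ZMod (m i)) = c i) ↔ x ≡ v [ZMOD ∏ i ∈ t, m i] := by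
  obtain ⟨k, hk⟩ := Nat.chineseRemainderOfFinset (fun i => (c i).val) m t hm hcop
  refine ⟨k, fun x => ?_⟩
  have hck (i) (hi : i ∈ t) : c i = ((k : ℤ) : ZMod (m i)) := by
    have : NeZero (m i) := ⟨hm i hi⟩
    rw [Int.cast_natCast, (ZMod.natCast_eq_natCast_iff _ _ _).mpr (hk i hi), ZMod.natCast_zmod_val]
  have hcop' : (t : Set ι).Pairwise (IsCoprime on fun i => (m i : ℤ)) :=
    fun i hi j hj hij => Nat.isCoprime_iff_coprime.mpr (hcop hi hj hij)
  rw [Int.modEq_iff_dvd]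
  constructor
  · intro hx
    exact prod_dvd_of_coprime hcop' fun i hi => by
      rw [← ZMod.intCast_eq_intCast_iff_dvd_sub, hx i hi, hck i hi]
  · intro hdvd i hi
    rw [hck i hi, ZMod.intCast_eq_intCast_iff_dvd_sub]
    exact (dvd_prod_of_mem _ hi).trans hdvd

theorem abs_card_Icc_filter_forall_intCast_ne_sub_le {ι : Type*} [Fintype ι] [DecidableEq ι]
    (m : ι → ℕ) (hm : ∀ i, m i ≠ 0) (hcop : Pairwise (Nat.Coprime on m)) (c : ∀ i, ZMod (m i))
    {a b : ℤ} (hab : a ≤ b + 1) :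
    |(#{x ∈ Icc a b | ∀ i, (x : ZMod (m i)) ≠ c i} : ℝ) - (b + 1 - a) * ∏ i, (1 - 1 / (m i : ℝ))|
      ≤ 2 ^ Fintype.card ι := by
  have hsieve := abs_card_filter_forall_not_sub_le (Icc a b) univ
    (fun i (x : ℤ) => (x : ZMod (m i)) = c i) (fun i => 1 / (m i : ℝ)) (b + 1 - a) fun t _ => by
      obtain ⟨v, hv⟩ := ZMod.exists_forall_intCast_eq_iff_modEq_prod t m (fun i _ => hm i)
        (hcop.set_pairwise _) c
      simp only [hv]
      rw [prod_div_distrib, prod_const_one, ← mul_div_assoc, mul_one, ← Nat.cast_prod]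
      exact_mod_cast Int.abs_card_Icc_filter_modEq_sub_le hab v
        (prod_pos fun i _ => Nat.pos_of_ne_zero (hm i))
  simpa using hsieve

theorem nu_le (p : ℕ) [NeZero p] {r : ℕ} (a : Fin r → ℤ) : nu p a ≤ p :=
  (card_le_univ _).trans (ZMod.card p).le

theorem card_filter_forall_ne_eq_sub_nu (n : ℕ) [NeZero n] {r : ℕ} (a : Fin r → ℤ) :
    #{c : ZMod n | ∀ i, (a i : ZMod n) ≠ c} = n - nu n a := by
  have : #{c : ZMod n | ∀ i, (a i : ZMod n) ≠ c} = #(univ.image fun i => (a i : ZMod n))ᶜ := by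
    congr 1; ext; simp
  rw [this, card_compl, ZMod.card, nu]

theorem one_sub_nu_div_eq (n : ℕ) [NeZero n] {r : ℕ} (a : Fin r → ℤ) :
    1 - (nu n a : ℝ) / n = (n : ℝ)⁻¹ * #{c : ZMod n | ∀ i, (a i : ZMod n) ≠ c} := by
  rw [card_filter_forall_ne_eq_sub_nu, Nat.cast_sub (nu_le n a), inv_mul_eq_div, sub_div,
    div_self]
  exact_mod_cast NeZero.ne n

theorem one_sub_nu_div_mem_unitInterval (p : ℕ) [NeZero p] {r : ℕ} (a : Fin r → ℤ) :
    1 - (nu p a : ℝ) / p ∈ unitInterval :=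
  ⟨sub_nonneg.mpr (div_le_one_of_le₀ (by exact_mod_cast nu_le p a) (Nat.cast_nonneg p)),
    sub_le_self _ (by positivity)⟩

-- No hypothesis on `m`: at `m = 0` the factor is `1 - 1 / 0 = 1`.
theorem one_sub_one_div_natCast_mem_unitInterval (m : ℕ) :
    1 - 1 / (m : ℝ) ∈ unitInterval :=
  ⟨sub_nonneg.mpr ((one_div (m : ℝ)).symm ▸ Nat.cast_inv_le_one m), sub_le_self _ (by positivity)⟩

theorem sum_piFinset_prod_one_sub_nu_div {ι : Type*} [Fintype ι] [DecidableEq ι] (m : ι → ℕ)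
    [∀ i, NeZero (m i)] (I : Finset ℤ) (r : ℕ) :
    ∑ v ∈ Fintype.piFinset (fun _ : Fin r => I), ∏ i, (1 - (nu (m i) v : ℝ) / m i) =
      (∏ i, (m i : ℝ))⁻¹ *
        ∑ γ : (∀ i, ZMod (m i)), (#{x ∈ I | ∀ i, (x : ZMod (m i)) ≠ γ i} : ℝ) ^ r := by
  have hpoint (v : Fin r → ℤ) : ∏ i, (1 - (nu (m i) v : ℝ) / m i) =
      (∏ i, (m i : ℝ))⁻¹ * ∑ γ : (∀ i, ZMod (m i)),
        ∏ j, (if ∀ i, (v j : ZMod (m i)) ≠ γ i then (1 : ℝ) else 0) := by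
    simp_rw [one_sub_nu_div_eq, prod_mul_distrib, prod_inv_distrib, card_filter, Nat.cast_sum,
      Fintype.prod_sum, Nat.cast_ite, Nat.cast_one, Nat.cast_zero, prod_boole, mem_univ,
      true_implies]
    congr! 3 with γ
    exact forall_comm
  simp_rw [hpoint, ← mul_sum, card_filter, Nat.cast_sum, Nat.cast_ite, Nat.cast_one,
    Nat.cast_zero, ← Fin.prod_const, prod_univ_sum]
  rw [sum_comm]

theorem abs_sum_piFinset_prod_one_sub_nu_div_sub_le {ι : Type*} [Fintype ι] [DecidableEq ι]
    (m : ι → ℕ) [∀ i, NeZero (m i)] (hcop : Pairwise (Nat.Coprime on m)) {a b : ℤ}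
    (hab : a ≤ b + 1) (r : ℕ) :
    |∑ v ∈ Fintype.piFinset (fun _ : Fin r => Icc a b), ∏ i, (1 - (nu (m i) v : ℝ) / m i)
        - ((b + 1 - a) * ∏ i, (1 - 1 / (m i : ℝ))) ^ r|
      ≤ r * (b + 1 - a) ^ (r - 1) * 2 ^ Fintype.card ι := by
  set N : ℝ := b + 1 - a
  set M : ℝ := N * ∏ i, (1 - 1 / (m i : ℝ))
  have hN : 0 ≤ N := by
    have : (a : ℝ) ≤ b + 1 := by exact_mod_cast hab
    simp only [N]; linarith
  have hprod := unitInterval.prod_mem (t := univ) fun i _ =>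
    one_sub_one_div_natCast_mem_unitInterval (m i)
  have hM : 0 ≤ M ∧ M ≤ N := ⟨mul_nonneg hN hprod.1, mul_le_of_le_one_right hN hprod.2⟩
  have hT (γ : ∀ i, ZMod (m i)) : (#{x ∈ Icc a b | ∀ i, (x : ZMod (m i)) ≠ γ i} : ℝ) ≤ N := by
    calc (#{x ∈ Icc a b | ∀ i, (x : ZMod (m i)) ≠ γ i} : ℝ) ≤ #(Icc a b) := by
          exact_mod_cast card_filter_le _ _
      _ = N := by
          rw [Int.card_Icc, ← Int.cast_natCast, Int.toNat_of_nonneg (by omega)]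
          push_cast; rfl
  have hpos : (0 : ℝ) < ∏ i, (m i : ℝ) :=
    prod_pos fun i _ => Nat.cast_pos.mpr (Nat.pos_of_ne_zero (NeZero.ne _))
  have haverage (c : ℝ) : (∏ i, (m i : ℝ))⁻¹ * ∑ _γ : (∀ i, ZMod (m i)), c = c := by
    rw [sum_const, card_univ, nsmul_eq_mul, Fintype.card_pi]
    simp [ZMod.card, hpos.ne']
  rw [sum_piFinset_prod_one_sub_nu_div, ← haverage (M ^ r), ← mul_sub, ← sum_sub_distrib,
    abs_mul, abs_of_pos (inv_pos.mpr hpos)]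
  calc (∏ i, (m i : ℝ))⁻¹ * |∑ γ : (∀ i, ZMod (m i)),
          ((#{x ∈ Icc a b | ∀ i, (x : ZMod (m i)) ≠ γ i} : ℝ) ^ r - M ^ r)|
      ≤ (∏ i, (m i : ℝ))⁻¹ * ∑ _γ : (∀ i, ZMod (m i)), r * N ^ (r - 1) * 2 ^ Fintype.card ι := by
        refine mul_le_mul_of_nonneg_left ((abs_sum_le_sum_abs _ _).trans
          (sum_le_sum fun γ _ => ?_)) (inv_nonneg.mpr hpos.le)
        refine (abs_pow_sub_pow_le_of_le (Nat.cast_nonneg _) hM.1 (hT γ) hM.2 r).trans ?_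
        gcongr
        exact abs_card_Icc_filter_forall_intCast_ne_sub_le m (fun i => NeZero.ne _) hcop γ hab
    _ = r * N ^ (r - 1) * 2 ^ Fintype.card ι := haverage _

theorem abs_sum_piFinset_prod_primes_sub_le (Q : Finset ℕ) (hQ : ∀ p ∈ Q, p.Prime) (r h : ℕ) :
    |∑ a ∈ Fintype.piFinset (fun _ : Fin r => Icc (0 : ℤ) h), ∏ p ∈ Q, (1 - (nu p a : ℝ) / p)
        - (((h : ℝ) + 1) * ∏ p ∈ Q, (1 - 1 / (p : ℝ))) ^ r|
      ≤ r * ((h : ℝ) + 1) ^ (r - 1) * 2 ^ #Q := by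
  have : ∀ q : Q, NeZero (q : ℕ) := fun q => ⟨(hQ q q.2).ne_zero⟩
  have hcop : Pairwise (Nat.Coprime on fun q : Q => (q : ℕ)) := fun q q' hqq' =>
    (Nat.coprime_primes (hQ q q.2) (hQ q' q'.2)).mpr (Subtype.coe_ne_coe.mpr hqq')
  have hbox := abs_sum_piFinset_prod_one_sub_nu_div_sub_le (fun q : Q => (q : ℕ)) hcop
    (a := 0) (b := h) (by omega) r
  push_cast at hbox
  simp_rw [← prod_coe_sort Q]
  simpa only [Fintype.card_coe, sub_zero] using hbox

theorem card_filter_apply_eq_apply_le {ι α : Type*} [Fintype ι] [DecidableEq ι] [DecidableEq α]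
    (I : Finset α) {i j : ι} (hij : i ≠ j) :
    #{v ∈ Fintype.piFinset (fun _ : ι => I) | v i = v j} ≤ #I ^ (Fintype.card ι - 1) := by
  calc #{v ∈ Fintype.piFinset (fun _ : ι => I) | v i = v j}
      ≤ #(Fintype.piFinset fun _ : {k // k ≠ j} => I) := by
        refine card_le_card_of_injOn (fun v k => v k) (fun v hv => ?_) fun v hv w hw hvw => ?_
        · simp only [coe_filter, Set.mem_ofPred_eq, Fintype.mem_piFinset, mem_coe] at hv ⊢
          exact fun k => hv.1 k
        · simp only [coe_filter, Set.mem_ofPred_eq] at hv hw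
          funext k
          by_cases hk : k = j
          · subst hk
            rw [← hv.2, ← hw.2]
            exact congrFun hvw ⟨i, hij⟩
          · exact congrFun hvw ⟨k, hk⟩
    _ = #I ^ (Fintype.card ι - 1) := by simp

theorem card_filter_not_injective_le {ι α : Type*} [Fintype ι] [DecidableEq ι] [DecidableEq α]
    (I : Finset α) :
    #{v ∈ Fintype.piFinset (fun _ : ι => I) | ¬ ∀ i j, i ≠ j → v i ≠ v j}
      ≤ Fintype.card ι ^ 2 * #I ^ (Fintype.card ι - 1) := by
  calc #{v ∈ Fintype.piFinset (fun _ : ι => I) | ¬ ∀ i j, i ≠ j → v i ≠ v j}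
      ≤ #((univ : Finset ι).offDiag.biUnion fun ij =>
          {v ∈ Fintype.piFinset (fun _ : ι => I) | v ij.1 = v ij.2}) := by
        refine card_le_card fun v hv => ?_
        simp only [mem_filter, not_forall, not_not] at hv
        obtain ⟨hv, i, j, hij, hvij⟩ := hv
        simp only [mem_biUnion, mem_offDiag, mem_univ, true_and, mem_filter]
        exact ⟨(i, j), hij, hv, hvij⟩
    _ ≤ #(univ : Finset ι).offDiag * #I ^ (Fintype.card ι - 1) :=
        card_biUnion_le_card_mul _ _ _ fun ij hij =>
          card_filter_apply_eq_apply_le I (mem_offDiag.mp hij).2.2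
    _ ≤ Fintype.card ι ^ 2 * #I ^ (Fintype.card ι - 1) := by
        gcongr
        rw [offDiag_card, card_univ, sq]
        exact Nat.sub_le _ _

theorem abs_sum_filter_sub_sum_le {α : Type*} (s : Finset α) (P : α → Prop) [DecidablePred P]
    (f : α → ℝ) (hf : ∀ x ∈ s, f x ∈ unitInterval) :
    |∑ x ∈ s with P x, f x - ∑ x ∈ s, f x| ≤ #{x ∈ s | ¬ P x} := by
  rw [← sum_filter_add_sum_filter_not s P f, sub_add_cancel_left, abs_neg,
    abs_of_nonneg (sum_nonneg fun x hx => (hf x (mem_filter.mp hx).1).1)]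
  simpa using sum_le_card_nsmul _ _ 1 fun x hx => (hf x (mem_filter.mp hx).1).2

theorem abs_sum_distinctTuples_sub_sum_piFinset_le (Q : Finset ℕ) (hQ : ∀ p ∈ Q, p.Prime)
    (r h : ℕ) :
    |∑ a ∈ distinctTuples r h, ∏ p ∈ Q, (1 - (nu p a : ℝ) / p)
        - ∑ a ∈ Fintype.piFinset (fun _ : Fin r => Icc (0 : ℤ) h), ∏ p ∈ Q, (1 - (nu p a : ℝ) / p)|
      ≤ r ^ 2 * ((h : ℝ) + 1) ^ (r - 1) := by
  refine (abs_sum_filter_sub_sum_le _ _ _ fun a _ => unitInterval.prod_mem fun p hp =>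
    have : NeZero p := ⟨(hQ p hp).ne_zero⟩
    one_sub_nu_div_mem_unitInterval p a).trans ?_
  have hcount := card_filter_not_injective_le (ι := Fin r) (Icc (0 : ℤ) h)
  simp only [Fintype.card_fin, Int.card_Icc, sub_zero] at hcount
  exact_mod_cast hcount

theorem abs_add_one_mul_pow_sub_mul_pow_le {x D : ℝ} (hx : 0 ≤ x) (hD : D ∈ unitInterval)
    (r : ℕ) : |((x + 1) * D) ^ r - (x * D) ^ r| ≤ r * (x + 1) ^ (r - 1) := by
  have hxD : x * D ≤ x + 1 := (mul_le_of_le_one_right hx hD.2).trans (by linarith)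
  refine (abs_pow_sub_pow_le_of_le (mul_nonneg (by positivity) hD.1) (mul_nonneg hx hD.1)
    (mul_le_of_le_one_right (by positivity) hD.2) hxD r).trans ?_
  rw [← sub_mul, add_sub_cancel_left, one_mul, abs_of_nonneg hD.1]
  exact mul_le_of_le_one_right (by positivity) hD.2

theorem abs_sum_distinctTuples_prod_primes_sub_le (Q : Finset ℕ) (hQ : ∀ p ∈ Q, p.Prime)
    (r h : ℕ) :
    |∑ a ∈ distinctTuples r h, ∏ p ∈ Q, (1 - (nu p a : ℝ) / p)
        - (h : ℝ) ^ r * ∏ p ∈ Q, (1 - 1 / (p : ℝ)) ^ r|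
      ≤ r * ((h : ℝ) + 1) ^ (r - 1) * (r + 1 + 2 ^ #Q) := by
  set S := ∑ a ∈ distinctTuples r h, ∏ p ∈ Q, (1 - (nu p a : ℝ) / p)
  set B := ∑ a ∈ Fintype.piFinset (fun _ : Fin r => Icc (0 : ℤ) h),
    ∏ p ∈ Q, (1 - (nu p a : ℝ) / p)
  set D := ∏ p ∈ Q, (1 - 1 / (p : ℝ))
  have hD := unitInterval.prod_mem fun p (_ : p ∈ Q) => one_sub_one_div_natCast_mem_unitInterval p
  rw [prod_pow, ← mul_pow]
  calc |S - ((h : ℝ) * D) ^ r|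
      ≤ |S - B| + |B - (((h : ℝ) + 1) * D) ^ r|
          + |(((h : ℝ) + 1) * D) ^ r - ((h : ℝ) * D) ^ r| := by
        linarith [abs_sub_le S B (((h : ℝ) * D) ^ r),
          abs_sub_le B ((((h : ℝ) + 1) * D) ^ r) (((h : ℝ) * D) ^ r)]
    _ ≤ r ^ 2 * ((h : ℝ) + 1) ^ (r - 1) + r * ((h : ℝ) + 1) ^ (r - 1) * 2 ^ #Q
          + r * ((h : ℝ) + 1) ^ (r - 1) := by
        gcongr
        · exact abs_sum_distinctTuples_sub_sum_piFinset_le Q hQ r h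
        · exact abs_sum_piFinset_prod_primes_sub_le Q hQ r h
        · exact abs_add_one_mul_pow_sub_mul_pow_le h.cast_nonneg hD r
    _ = r * ((h : ℝ) + 1) ^ (r - 1) * (r + 1 + 2 ^ #Q) := by ring

theorem two_pow_card_primes_le {h : ℝ} (hh : 1 ≤ h) :
    (2 : ℝ) ^ #{p ∈ range (⌊Real.log h / 2⌋₊ + 1) | p.Prime} ≤ 2 * h ^ (Real.log 2 / 2) := by
  set Y := ⌊Real.log h / 2⌋₊
  have hY : (Y : ℝ) ≤ Real.log h / 2 := Nat.floor_le (by linarith [Real.log_nonneg hh])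
  calc (2 : ℝ) ^ #{p ∈ range (Y + 1) | p.Prime} ≤ 2 ^ (Y + 1) :=
        pow_le_pow_right₀ one_le_two ((card_filter_le _ _).trans (card_range _).le)
    _ = 2 * (2 : ℝ) ^ (Y : ℝ) := by rw [pow_succ', Real.rpow_natCast]
    _ ≤ 2 * (2 : ℝ) ^ (Real.log h / 2) := by gcongr; norm_num
    _ = 2 * h ^ (Real.log 2 / 2) := by
        rw [Real.rpow_def_of_pos two_pos, Real.rpow_def_of_pos (by linarith)]
        ring_nf

theorem eventually_mul_pow_le_rpow {r : ℕ} (hr : 1 ≤ r) {θ κ : ℝ} (hθ : 0 ≤ θ) (hθκ : θ < κ) :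
    ∀ᶠ h : ℕ in atTop,
      r * ((h : ℝ) + 1) ^ (r - 1) * (r + 1 + 2 * (h : ℝ) ^ θ) ≤ (h : ℝ) ^ ((r : ℝ) - 1 + κ) := by
  set C : ℝ := r * 2 ^ (r - 1) * (r + 3)
  have hgrowth : Tendsto (fun h : ℕ => (h : ℝ) ^ (κ - θ)) atTop atTop :=
    (tendsto_rpow_atTop (sub_pos.mpr hθκ)).comp tendsto_natCast_atTop_atTop
  filter_upwards [hgrowth.eventually_ge_atTop C, eventually_ge_atTop 1] with h hC h1
  have h1' : (1 : ℝ) ≤ h := by exact_mod_cast h1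
  have hθ1 : 1 ≤ (h : ℝ) ^ θ := Real.one_le_rpow h1' hθ
  calc r * ((h : ℝ) + 1) ^ (r - 1) * (r + 1 + 2 * (h : ℝ) ^ θ)
      ≤ r * (2 * (h : ℝ)) ^ (r - 1) * ((r + 3) * (h : ℝ) ^ θ) := by
        gcongr
        · linarith
        · nlinarith
    _ = C * ((h : ℝ) ^ ((r : ℝ) - 1) * (h : ℝ) ^ θ) := by
        rw [mul_pow, ← Real.rpow_natCast (h : ℝ), Nat.cast_sub hr, Nat.cast_one]
        ring
    _ ≤ (h : ℝ) ^ (κ - θ) * ((h : ℝ) ^ ((r : ℝ) - 1) * (h : ℝ) ^ θ) := by gcongr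
    _ = (h : ℝ) ^ ((r : ℝ) - 1 + κ) := by
        rw [← Real.rpow_add (by linarith), ← Real.rpow_add (by linarith)]
        ring_nf

/-- With `y = (1/2) log h`,
`∑_{0 ≤ h₁,…,h_r ≤ h distinct} ∏_{p ≤ y}(1 - ν_p(h)/p)
  = h^r ∏_{p ≤ y}(1 - 1/p)^r + O(h^{r - 1/2 + o(1)})`. -/
theorem truncated_sum_asymp (r : ℕ) (hr : 1 ≤ r) :
    ∀ ε : ℝ, 0 < ε → ∀ᶠ h : ℕ in Filter.atTop,
      |(∑ a ∈ distinctTuples r h,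
          ∏ p ∈ (Finset.range (⌊Real.log h / 2⌋₊ + 1)).filter Nat.Prime,
            (1 - (nu p a : ℝ) / (p : ℝ)))
        - (h : ℝ) ^ r *
            ∏ p ∈ (Finset.range (⌊Real.log h / 2⌋₊ + 1)).filter Nat.Prime,
              (1 - 1 / (p : ℝ)) ^ r|
      ≤ (h : ℝ) ^ ((r : ℝ) - 1 / 2 + ε) := by
  intro ε hε
  have hlog2 : Real.log 2 / 2 < 1 / 2 + ε := by linarith [Real.log_two_lt_d9]
  filter_upwards [eventually_mul_pow_le_rpow hr (by positivity) hlog2, eventually_ge_atTop 1]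
    with h hbound h1
  refine (abs_sum_distinctTuples_prod_primes_sub_le _ (fun p hp => (mem_filter.mp hp).2) r h).trans
    ?_
  calc _ ≤ r * ((h : ℝ) + 1) ^ (r - 1) * (r + 1 + 2 * (h : ℝ) ^ (Real.log 2 / 2)) := by
        gcongr
        exact two_pow_card_primes_le (by exact_mod_cast h1)
    _ ≤ (h : ℝ) ^ ((r : ℝ) - 1 + (1 / 2 + ε)) := hbound
    _ = (h : ℝ) ^ ((r : ℝ) - 1 / 2 + ε) := by ring_nf
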